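/- arXiv:1607.04789 — 2 statements merged into one kernel-verified Lean document; each statement's English description precedes it below -/
import Mathlib

section
/- If α > 1 and β > 0 satisfy both α⁴ − 4β²α² + 4β² = 0 and β² + δ² ≤ α² for some δ ∈ (0,1], then α² ≥ (2/3)(1 + δ²) + (2/3)√((1 + δ²)² − 3δ²). -/
theorem stmt_8 (α β δ : ℝ) (hα : 1 < α) (hβ : 0 < β)
    (hδ : δ ∈ Set.Ioc (0 : ℝ) 1)
    (hroot : α ^ 4 - 4 * β ^ 2 * α ^ 2 + 4 * β ^ 2 = 0)
    (hle : β ^ 2 + δ ^ 2 ≤ α ^ 2) :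
    α ^ 2 ≥ 2 / 3 * (1 + δ ^ 2) + 2 / 3 * Real.sqrt ((1 + δ ^ 2) ^ 2 - 3 * δ ^ 2) := by
  obtain ⟨hδ0, hδ1⟩ := hδ
  set s := Real.sqrt ((1 + δ ^ 2) ^ 2 - 3 * δ ^ 2) with hs
  have hs0 : 0 ≤ s := Real.sqrt_nonneg _
  have hs2 : s ^ 2 = (1 + δ ^ 2) ^ 2 - 3 * δ ^ 2 := by
    rw [hs, Real.sq_sqrt]; nlinarith [sq_nonneg (δ ^ 2 - 1)]
  have hα2 : 1 < α ^ 2 := by nlinarith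
  have hq : 3 * (α ^ 2) ^ 2 - 4 * (1 + δ ^ 2) * α ^ 2 + 4 * δ ^ 2 ≥ 0 := by
    nlinarith [mul_nonneg (by nlinarith : (0:ℝ) ≤ α ^ 2 - δ ^ 2 - β ^ 2)
      (by nlinarith : (0:ℝ) ≤ α ^ 2 - 1)]
  have hgt : 2 * s > 2 * δ ^ 2 - 1 := by nlinarith [hs2, hs0, sq_nonneg δ]
  nlinarith [hq, hs2, hgt, hα2, mul_pos (by nlinarith : (0:ℝ) < 3 * α ^ 2 - 2 * (1 + δ ^ 2) + 2 * s)
    (by nlinarith : (0:ℝ) < 3 * α ^ 2 - 2 * (1 + δ ^ 2) + 2 * s)]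
end

section
/- Combining 2κ(κ−√(κ²−1)) = 1 + Θ(1/κ²) with the polynomial-growth condition α^d ≤ d^{O(1)} where α² = 2κ(κ−√(κ²−1)): there exist constants such that α(d)^d is polynomially bounded in d if and only if κ(d) = Ω(√(d/log d)). -/
/-!
Rationalising, `α² = 2κ(κ - √(κ² - 1)) = 1 + x` with `x = (κ + √(κ² - 1))⁻²`, and
`κ ≤ κ + √(κ² - 1) ≤ 2κ` gives `x ≍ κ⁻²`; as `log (1 + x) ≍ x` on `[0, 1]`, also `log α ≍ κ⁻²`.
Taking logarithms, `α^d ≤ d^C` eventually for some `C` says exactly that `d = O(κ² log d)`,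
which is `κ = Ω(√(d / log d))`.
-/

open Filter Real

noncomputable def approxFactor (k : ℝ) : ℝ := √(2 * k * (k - √(k ^ 2 - 1)))

section approxFactor

variable {k : ℝ}

lemma two_mul_mul_sub_sqrt_sq_sub_one (hk : 1 ≤ k) :
    2 * k * (k - √(k ^ 2 - 1)) = 1 + (k + √(k ^ 2 - 1))⁻¹ ^ 2 := by
  have hs : √(k ^ 2 - 1) ^ 2 = k ^ 2 - 1 := sq_sqrt (by nlinarith)
  have hinv : (k + √(k ^ 2 - 1))⁻¹ = k - √(k ^ 2 - 1) :=
    inv_eq_of_mul_eq_one_right (by linear_combination -hs)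
  rw [hinv]
  linear_combination -hs

lemma approxFactor_pos (hk : 1 ≤ k) : 0 < approxFactor k := by
  rw [approxFactor, two_mul_mul_sub_sqrt_sq_sub_one hk]
  positivity

lemma log_approxFactor_mem_Icc (hk : 1 ≤ k) :
    log (approxFactor k) ∈ Set.Icc (1 / (12 * k ^ 2)) (1 / (2 * k ^ 2)) := by
  set x := (k + √(k ^ 2 - 1))⁻¹ ^ 2
  have hlog : log (approxFactor k) = log (1 + x) / 2 := by
    rw [approxFactor, two_mul_mul_sub_sqrt_sq_sub_one hk, log_sqrt (by positivity)]
  have hs : √(k ^ 2 - 1) ≤ k := sqrt_le_left (by linarith) |>.2 (by linarith)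
  have hk_le : k ≤ k + √(k ^ 2 - 1) := le_add_of_nonneg_right (sqrt_nonneg _)
  have hx : x = ((k + √(k ^ 2 - 1)) ^ 2)⁻¹ := inv_pow _ _
  have hx_lower : 1 / (4 * k ^ 2) ≤ x := by
    rw [hx, one_div, show 4 * k ^ 2 = (2 * k) ^ 2 by ring]
    gcongr
    linarith
  have hx_upper : x ≤ 1 / k ^ 2 := by
    rw [hx, one_div]
    gcongr
  have hx_nonneg : 0 ≤ x := by positivity
  have hx_le_one : x ≤ 1 := hx_upper.trans (div_le_one_of_le₀ (by nlinarith) (by positivity))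
  have hlog_upper : log (1 + x) ≤ x := by
    linarith [log_le_sub_one_of_pos (by linarith : 0 < 1 + x)]
  have hlog_lower : 2 * x / 3 ≤ log (1 + x) :=
    (div_le_div_of_nonneg_left (by positivity) (by positivity) (by linarith)).trans
      (le_log_one_add_of_nonneg hx_nonneg)
  rw [hlog]
  constructor
  · calc 1 / (12 * k ^ 2) = 2 * (1 / (4 * k ^ 2)) / 3 / 2 := by ring
      _ ≤ 2 * x / 3 / 2 := by gcongr
      _ ≤ log (1 + x) / 2 := by gcongr
  · calc log (1 + x) / 2 ≤ 1 / k ^ 2 / 2 := by linarith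
      _ = 1 / (2 * k ^ 2) := by ring

end approxFactor

lemma pow_le_rpow_iff_mul_log_le {a x C : ℝ} (n : ℕ) (ha : 0 < a) (hx : 0 < x) :
    a ^ n ≤ x ^ C ↔ n * log a ≤ C * log x := by
  rw [← log_le_log_iff (by positivity) (by positivity), log_pow, log_rpow hx]

lemma mul_sqrt_div_le_iff {c k t l : ℝ} (hc : 0 ≤ c) (hk : 0 ≤ k) (hl : 0 < l) :
    c * √(t / l) ≤ k ↔ c ^ 2 * t ≤ k ^ 2 * l := by
  rw [show c * √(t / l) = √(c ^ 2 * (t / l)) by rw [sqrt_mul (sq_nonneg c), sqrt_sq hc],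
    sqrt_le_left hk, mul_div_assoc', div_le_iff₀ hl]

section Asymptotics

variable {κ : ℕ → ℝ}

lemma eventually_two_le_natCast : ∀ᶠ d : ℕ in atTop, (2 : ℝ) ≤ d :=
  (eventually_ge_atTop 2).mono fun _ hd => by exact_mod_cast hd

lemma exists_pow_approxFactor_le_iff (hκ : ∀ d, 1 ≤ κ d) :
    (∃ C : ℝ, ∀ᶠ d : ℕ in atTop, approxFactor (κ d) ^ d ≤ (d : ℝ) ^ C) ↔
      ∃ C : ℝ, ∀ᶠ d : ℕ in atTop, (d : ℝ) ≤ C * κ d ^ 2 * log d := by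
  constructor
  · rintro ⟨C, hC⟩
    refine ⟨12 * C, ?_⟩
    filter_upwards [hC, eventually_two_le_natCast] with d hd hd2
    have hpos : 0 < κ d := by linarith [hκ d]
    rw [pow_le_rpow_iff_mul_log_le d (approxFactor_pos (hκ d)) (by linarith)] at hd
    have hlower := mul_le_mul_of_nonneg_left (log_approxFactor_mem_Icc (hκ d)).1 d.cast_nonneg
    rw [mul_one_div, div_le_iff₀ (by positivity)] at hlower
    calc (d : ℝ) ≤ d * log (approxFactor (κ d)) * (12 * κ d ^ 2) := hlower
      _ ≤ C * log d * (12 * κ d ^ 2) := by gcongr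
      _ = 12 * C * κ d ^ 2 * log d := by ring
  · rintro ⟨C, hC⟩
    refine ⟨C / 2, ?_⟩
    filter_upwards [hC, eventually_two_le_natCast] with d hd hd2
    have hpos : 0 < κ d := by linarith [hκ d]
    rw [pow_le_rpow_iff_mul_log_le d (approxFactor_pos (hκ d)) (by linarith)]
    calc (d : ℝ) * log (approxFactor (κ d)) ≤ d * (1 / (2 * κ d ^ 2)) :=
          mul_le_mul_of_nonneg_left (log_approxFactor_mem_Icc (hκ d)).2 d.cast_nonneg
      _ ≤ C * κ d ^ 2 * log d / (2 * κ d ^ 2) := by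
          rw [mul_one_div]
          gcongr
      _ = C / 2 * log d := by field_simp

lemma exists_le_mul_sq_mul_log_iff (hκ : ∀ d, 0 ≤ κ d) :
    (∃ C : ℝ, ∀ᶠ d : ℕ in atTop, (d : ℝ) ≤ C * κ d ^ 2 * log d) ↔
      ∃ c > (0 : ℝ), ∀ᶠ d : ℕ in atTop, c * √((d : ℝ) / log d) ≤ κ d := by
  constructor
  · rintro ⟨C, hC⟩
    have hC' : 0 < max C 1 := lt_max_of_lt_right one_pos
    refine ⟨(√(max C 1))⁻¹, by positivity, ?_⟩
    filter_upwards [hC, eventually_two_le_natCast] with d hd hd2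
    have hlog : 0 < log d := log_pos (by linarith)
    rw [mul_sqrt_div_le_iff (by positivity) (hκ d) hlog, inv_pow, sq_sqrt hC'.le,
      inv_mul_le_iff₀ hC']
    calc (d : ℝ) ≤ C * κ d ^ 2 * log d := hd
      _ ≤ max C 1 * (κ d ^ 2 * log d) := by
          rw [← mul_assoc]
          gcongr
          exact le_max_left C 1
  · rintro ⟨c, hc, hcκ⟩
    refine ⟨(c ^ 2)⁻¹, ?_⟩
    filter_upwards [hcκ, eventually_two_le_natCast] with d hd hd2
    rw [mul_sqrt_div_le_iff hc.le (hκ d) (log_pos (by linarith)), mul_comm,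
      ← le_div_iff₀ (by positivity)] at hd
    rwa [mul_assoc, inv_mul_eq_div]

end Asymptotics

theorem stmt_17 (κ : ℕ → ℝ) (hκ : ∀ d, 1 ≤ κ d)
    (α : ℕ → ℝ)
    (hαdef : ∀ d, α d = Real.sqrt (2 * κ d * (κ d - Real.sqrt ((κ d) ^ 2 - 1)))) :
    (∃ C : ℝ, ∀ᶠ d : ℕ in atTop, (α d) ^ d ≤ (d : ℝ) ^ C) ↔
      (∃ c > (0 : ℝ), ∀ᶠ d : ℕ in atTop,
        c * Real.sqrt ((d : ℝ) / Real.log d) ≤ κ d) := by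
  obtain rfl : α = fun d => approxFactor (κ d) := funext hαdef
  exact (exists_pow_approxFactor_le_iff hκ).trans
    (exists_le_mul_sq_mul_log_iff fun d => zero_le_one.trans (hκ d))
end
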